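/- Let $B \subseteq \mathbb{R}^n$ be the open unit ball and define $f(s,y) := s^{-1/2} \mathbf{1}_B(y)$ for $(s,y) \in (0,1) \times \mathbb{R}^n$. Then $f$ has finite $\mathrm{Z}^{\infty,q}_{-1/2}(1)$ norm for every $q \in (1,\infty)$, but $f \notin \L^2((0,1) \times B)$, i.e., $\int_0^1 \int_B |f(s,y)|^2 \, dy \, ds = \infty$. -/

import Mathlib

open MeasureTheory Set Metric
open scoped ENNReal

/-- The weighted Z-space quasinorm `‖f‖_{Z^{∞,q}_{-1/2}(T)}`. -/
noncomputable def Znorm (n : ℕ) (q : ℝ) (T : ℝ≥0∞) (f : ℝ → (Fin n → ℝ) → ℝ) : ℝ≥0∞ :=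
  ⨆ (x : Fin n → ℝ) (t : ℝ) (_ : 0 < t ∧ ENNReal.ofReal t < T),
    ((∫⁻ s in Set.Ioo (t / 2) t, ∫⁻ y in Metric.ball x (Real.sqrt t),
        ENNReal.ofReal (|Real.sqrt s * f s y| ^ q)) /
      (volume (Set.Ioo (t / 2) t) * volume (Metric.ball x (Real.sqrt t)))) ^ (1 / q)

/-! The weight `s^{1/2}` exactly cancels the singularity of `f` in every Whitney box, so the
`Z`-norm only sees the indicator and is at most `1`. The square `f² = s⁻¹ 𝟙_B` however has a
non-integrable singularity at `s = 0`. -/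

lemma Znorm_le_ofReal {n : ℕ} {q : ℝ} {T : ℝ≥0∞} {f : ℝ → (Fin n → ℝ) → ℝ} {C : ℝ}
    (hq : 0 < q) (hC : 0 ≤ C) (hf : ∀ s, 0 < s → ∀ y, |√s * f s y| ≤ C) :
    Znorm n q T f ≤ ENNReal.ofReal C := by
  refine iSup_le fun x => iSup_le fun t => iSup_le fun ⟨ht, _⟩ => ?_
  have hint : ∫⁻ s in Ioo (t / 2) t, ∫⁻ y in ball x √t, ENNReal.ofReal (|√s * f s y| ^ q)
      ≤ ENNReal.ofReal (C ^ q) * (volume (Ioo (t / 2) t) * volume (ball x √t)) :=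
    calc _ ≤ ∫⁻ _ in Ioo (t / 2) t, ∫⁻ _ in ball x √t, ENNReal.ofReal (C ^ q) := by
          refine setLIntegral_mono' measurableSet_Ioo fun s hs => lintegral_mono fun y => ?_
          exact ENNReal.ofReal_le_ofReal
            (Real.rpow_le_rpow (abs_nonneg _) (hf s (by linarith [hs.1]) y) hq.le)
      _ = _ := by simp only [setLIntegral_const]; ring
  calc _ ≤ ENNReal.ofReal (C ^ q) ^ (1 / q) :=
        ENNReal.rpow_le_rpow (ENNReal.div_le_of_le_mul hint) (by positivity)
    _ = ENNReal.ofReal C := by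
      rw [ENNReal.ofReal_rpow_of_nonneg (by positivity) (by positivity), ← Real.rpow_mul hC,
        mul_one_div_cancel hq.ne', Real.rpow_one]

lemma sqrt_mul_rpow_neg_half {s : ℝ} (hs : 0 < s) : √s * s ^ (-(1 / 2 : ℝ)) = 1 := by
  rw [Real.rpow_neg hs.le, ← Real.sqrt_eq_rpow, mul_inv_cancel₀ (Real.sqrt_pos.2 hs).ne']

lemma rpow_neg_half_sq {s : ℝ} (hs : 0 < s) : (s ^ (-(1 / 2 : ℝ))) ^ 2 = s⁻¹ := by
  rw [← Real.rpow_natCast, ← Real.rpow_mul hs.le]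
  norm_num [Real.rpow_neg_one]

lemma lintegral_Ioo_zero_one_inv_eq_top : ∫⁻ s in Ioo (0 : ℝ) 1, ENNReal.ofReal s⁻¹ = ⊤ := by
  by_contra h
  have hInt : IntegrableOn (fun s : ℝ => s ^ (-1 : ℝ)) (Ioo 0 1) := by
    simp only [Real.rpow_neg_one]
    refine (lintegral_ofReal_ne_top_iff_integrable (by fun_prop) ?_).1 h
    exact (ae_restrict_iff' measurableSet_Ioo).2 (ae_of_all _ fun s hs => inv_nonneg.2 hs.1.le)
  exact lt_irrefl _ ((intervalIntegral.integrableOn_Ioo_rpow_iff zero_lt_one).1 hInt)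

/-- The function `f(s,y) = s^{-1/2} 𝟙_B(y)` on `(0,1) × ℝⁿ` has finite
`Z^{∞,q}_{-1/2}(1)` norm for every `q ∈ (1,∞)`, but is not square integrable on
`(0,1) × B`, where `B` is the open unit ball. -/
theorem Znorm_not_subset_L2 (n : ℕ)
    (f : ℝ → (Fin n → ℝ) → ℝ)
    (hf : f = fun s y => s ^ (-(1 / 2 : ℝ)) *
      Set.indicator (Metric.ball (0 : Fin n → ℝ) 1) (fun _ => (1 : ℝ)) y) :
    (∀ q : ℝ, 1 < q → Znorm n q 1 f < ⊤) ∧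
      (∫⁻ s in Set.Ioo (0 : ℝ) 1, ∫⁻ y in Metric.ball (0 : Fin n → ℝ) 1,
        ENNReal.ofReal (f s y ^ 2)) = ⊤ := by
  subst hf
  have hweighted : ∀ s, 0 < s → ∀ y,
      |√s * (s ^ (-(1 / 2 : ℝ)) * (ball (0 : Fin n → ℝ) 1).indicator (fun _ => 1) y)| ≤ 1 := by
    intro s hs y
    rw [← mul_assoc, sqrt_mul_rpow_neg_half hs, one_mul]
    by_cases hy : y ∈ ball (0 : Fin n → ℝ) 1 <;> simp [hy]
  have hslice : ∀ s ∈ Ioo (0 : ℝ) 1, ∫⁻ y in ball (0 : Fin n → ℝ) 1,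
      ENNReal.ofReal ((s ^ (-(1 / 2 : ℝ)) * (ball 0 1).indicator (fun _ => 1) y) ^ 2) =
      ENNReal.ofReal s⁻¹ * volume (ball (0 : Fin n → ℝ) 1) := by
    intro s hs
    rw [← setLIntegral_const]
    refine setLIntegral_congr_fun measurableSet_ball fun y hy => ?_
    rw [indicator_of_mem hy, mul_one, rpow_neg_half_sq hs.1]
  refine ⟨fun q hq => (Znorm_le_ofReal (by linarith) zero_le_one hweighted).trans_lt
    ENNReal.ofReal_lt_top, ?_⟩
  rw [setLIntegral_congr_fun measurableSet_Ioo hslice, lintegral_mul_const _ (by fun_prop),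
    lintegral_Ioo_zero_one_inv_eq_top, ENNReal.top_mul (measure_ball_pos volume _ one_pos).ne']
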